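/- arXiv:2503.18682 — 8 statements merged into one kernel-verified Lean document; each statement's English description precedes it below -/
import Mathlib

section
/- Let Σ be a 3×3 real symmetric positive definite matrix, μ ∈ ℝ³, and κ > 0 with c² > κ, where c := √(μᵀΣ⁻¹μ). Then every element e of the boundary set E satisfies eᵀΣ⁻¹e = eᵀΣ⁻¹μ = c² − κ. -/
/-!
The point `e = τ(x) x` is the `Σ⁻¹`-orthogonal projection of `μ` onto the line `ℝ x`, so
`eᵀΣ⁻¹e = eᵀΣ⁻¹μ`, and Pythagoras gives `D_ray(x) = μᵀΣ⁻¹μ − eᵀΣ⁻¹μ`. On the boundary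
`D_ray(x) = κ`, hence `eᵀΣ⁻¹μ = c² − κ`.
-/

open Matrix

namespace Matrix

variable {n R : Type*} [Fintype n]

theorem smul_dotProduct_mulVec_smul_of_mul_eq [CommRing R] (A : Matrix n n R) (x μ : n → R)
    {t : R} (ht : t * (x ⬝ᵥ A *ᵥ x) = x ⬝ᵥ A *ᵥ μ) :
    (t • x) ⬝ᵥ A *ᵥ (t • x) = (t • x) ⬝ᵥ A *ᵥ μ := by
  simp only [mulVec_smul, dotProduct_smul, smul_dotProduct, smul_eq_mul, ← ht]

theorem IsSymm.sub_dotProduct_mulVec_sub_of_eq [CommRing R] {A : Matrix n n R} (hA : A.IsSymm)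
    {e μ : n → R} (he : e ⬝ᵥ A *ᵥ e = e ⬝ᵥ A *ᵥ μ) :
    (e - μ) ⬝ᵥ A *ᵥ (e - μ) = μ ⬝ᵥ A *ᵥ μ - e ⬝ᵥ A *ᵥ μ := by
  have hswap : μ ⬝ᵥ A *ᵥ e = e ⬝ᵥ A *ᵥ μ := by
    rw [dotProduct_mulVec, ← mulVec_transpose, hA.eq, dotProduct_comm]
  simp only [mulVec_sub, dotProduct_sub, sub_dotProduct, he, hswap]
  ring

end Matrix

theorem stmt_5_general (Cov : Matrix (Fin 3) (Fin 3) ℝ) (hCov : Cov.PosDef)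
    (μ : Fin 3 → ℝ) (κ : ℝ) :
    let τ : (Fin 3 → ℝ) → ℝ := fun x => (x ⬝ᵥ Cov⁻¹.mulVec μ) / (x ⬝ᵥ Cov⁻¹.mulVec x)
    let Dray : (Fin 3 → ℝ) → ℝ := fun x => (τ x • x - μ) ⬝ᵥ Cov⁻¹.mulVec (τ x • x - μ)
    let E : Set (Fin 3 → ℝ) := {p | ∃ x : Fin 3 → ℝ, x ≠ 0 ∧ Dray x = κ ∧ p = τ x • x}
    ∀ e ∈ E,
      e ⬝ᵥ Cov⁻¹.mulVec e = e ⬝ᵥ Cov⁻¹.mulVec μ ∧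
      e ⬝ᵥ Cov⁻¹.mulVec μ = Real.sqrt (μ ⬝ᵥ Cov⁻¹.mulVec μ) ^ 2 - κ := by
  intro τ Dray E e ⟨x, hx, hD, he⟩
  have hInv : Cov⁻¹.PosDef := hCov.inv
  have hxx : x ⬝ᵥ Cov⁻¹ *ᵥ x ≠ 0 := by simpa using (hInv.dotProduct_mulVec_pos hx).ne'
  have hproj : e ⬝ᵥ Cov⁻¹ *ᵥ e = e ⬝ᵥ Cov⁻¹ *ᵥ μ :=
    he ▸ smul_dotProduct_mulVec_smul_of_mul_eq _ x μ (div_mul_cancel₀ _ hxx)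
  have hμμ : 0 ≤ μ ⬝ᵥ Cov⁻¹ *ᵥ μ := by simpa using hInv.posSemidef.dotProduct_mulVec_nonneg μ
  have hpyth := (isHermitian_iff_isSymm.mp hInv.isHermitian).sub_dotProduct_mulVec_sub_of_eq hproj
  refine ⟨hproj, ?_⟩
  rw [Real.sq_sqrt hμμ, ← hD]
  simp only [Dray, ← he, hpyth]
  ring

/-- Assuming `c² > κ`, every element `e` of the boundary set
`E = { τ(x)x : x ≠ 0, D_ray(x; μ, Σ) = κ }` satisfies
`eᵀΣ⁻¹e = eᵀΣ⁻¹μ = c² − κ`. -/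
theorem stmt_5 (Cov : Matrix (Fin 3) (Fin 3) ℝ) (hCov : Cov.PosDef)
    (μ : Fin 3 → ℝ) (κ : ℝ) (hκ : 0 < κ)
    (hc : Real.sqrt (μ ⬝ᵥ Cov⁻¹.mulVec μ) ^ 2 > κ) :
    let τ : (Fin 3 → ℝ) → ℝ := fun x => (x ⬝ᵥ Cov⁻¹.mulVec μ) / (x ⬝ᵥ Cov⁻¹.mulVec x)
    let Dray : (Fin 3 → ℝ) → ℝ := fun x => (τ x • x - μ) ⬝ᵥ Cov⁻¹.mulVec (τ x • x - μ)
    let E : Set (Fin 3 → ℝ) := {p | ∃ x : Fin 3 → ℝ, x ≠ 0 ∧ Dray x = κ ∧ p = τ x • x}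
    ∀ e ∈ E,
      e ⬝ᵥ Cov⁻¹.mulVec e = e ⬝ᵥ Cov⁻¹.mulVec μ ∧
      e ⬝ᵥ Cov⁻¹.mulVec μ = Real.sqrt (μ ⬝ᵥ Cov⁻¹.mulVec μ) ^ 2 - κ :=
  stmt_5_general Cov hCov μ κ
end

section
/- Let S be a 3×3 diagonal matrix with positive diagonal entries, R_p a 3×3 rotation matrix, Σ := R_p S² R_pᵀ, μ ∈ ℝ³ nonzero, c := √(μᵀΣ⁻¹μ), and 0 < κ < c². Then μ̂ := (1/c) S⁻¹ R_pᵀ μ is a unit vector, and for every e in the boundary set E, the vector ê := (c² − κ)^{−1/2} S⁻¹ R_pᵀ e is a unit vector satisfying êᵀμ̂ = b, where b := √(1 − κ/c²). In particular, all such ê lie on a circle embedded in the unit sphere of ℝ³. -/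
/-!
Whitening by `A = S⁻¹R_pᵀ` turns the Mahalanobis form of `Σ` into the Euclidean one, since
`Σ⁻¹ = AᵀA`. In whitened coordinates `τ(x)x` becomes the orthogonal projection `p` of
`m = Aμ` onto the line spanned by `Ax`, so Pythagoras gives `|p|² = ⟨p, m⟩ = |m|² − κ = c² − κ`
on the boundary. Normalising `p` and `m` yields two unit vectors with inner product
`√(c² − κ) / c = √(1 − κ/c²)`.
-/

open Matrix

namespace Matrix

theorem inv_conj_mul_self_eq_transpose_mul_self {n α : Type*} [Fintype n] [DecidableEq n]
    [CommRing α] {R S : Matrix n n α} (hR : Rᵀ * R = 1) (hS : Sᵀ = S) :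
    (R * (S * S) * Rᵀ)⁻¹ = (S⁻¹ * Rᵀ)ᵀ * (S⁻¹ * Rᵀ) := by
  rw [mul_inv_rev, mul_inv_rev, mul_inv_rev, inv_eq_right_inv (mul_eq_one_comm.mp hR),
    inv_eq_right_inv hR, transpose_mul, transpose_transpose, transpose_nonsing_inv, hS]
  noncomm_ring

theorem dotProduct_transpose_mul_self_mulVec {n α : Type*} [Fintype n] [CommSemiring α]
    (A : Matrix n n α) (x y : n → α) :
    x ⬝ᵥ (Aᵀ * A) *ᵥ y = A *ᵥ x ⬝ᵥ A *ᵥ y := by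
  rw [← mulVec_mulVec, dotProduct_mulVec, vecMul_transpose]

end Matrix

section LineProjection

variable {ι K : Type*} [Fintype ι] [Field K]

/-- The orthogonal projection of `m` onto the line spanned by `u` (zero when `u ⬝ᵥ u = 0`). -/
def lineProj (u m : ι → K) : ι → K := ((u ⬝ᵥ m) / (u ⬝ᵥ u)) • u

theorem lineProj_dotProduct_self (u m : ι → K) :
    lineProj u m ⬝ᵥ lineProj u m = lineProj u m ⬝ᵥ m := by
  by_cases hu : u ⬝ᵥ u = 0
  · simp [lineProj, hu]
  · simp only [lineProj, smul_dotProduct, dotProduct_smul, smul_eq_mul]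
    field_simp

theorem sub_lineProj_dotProduct_self (u m : ι → K) :
    (lineProj u m - m) ⬝ᵥ (lineProj u m - m) = m ⬝ᵥ m - lineProj u m ⬝ᵥ m := by
  have hpp := lineProj_dotProduct_self u m
  simp only [sub_dotProduct, dotProduct_sub, dotProduct_comm m (lineProj u m)] at hpp ⊢
  linear_combination hpp

end LineProjection

theorem inv_sqrt_smul_dotProduct_self {ι : Type*} [Fintype ι] {v : ι → ℝ} {s : ℝ}
    (hv : v ⬝ᵥ v = s) (hs : 0 < s) : ((√s)⁻¹ • v) ⬝ᵥ ((√s)⁻¹ • v) = 1 := by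
  rw [smul_dotProduct, dotProduct_smul, hv, smul_eq_mul, smul_eq_mul, ← mul_assoc,
    ← mul_inv, Real.mul_self_sqrt hs.le, inv_mul_cancel₀ hs.ne']

theorem inv_sqrt_smul_dotProduct_one_div_smul {ι : Type*} [Fintype ι] {p m : ι → ℝ}
    {c κ : ℝ} (hc : 0 < c) (hκ : κ < c ^ 2) (hpm : p ⬝ᵥ m = c ^ 2 - κ) :
    ((√(c ^ 2 - κ))⁻¹ • p) ⬝ᵥ ((1 / c) • m) = √(1 - κ / c ^ 2) := by
  have hs : 0 < c ^ 2 - κ := sub_pos.mpr hκ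
  have hsqrt : √(c ^ 2 - κ) ^ 2 = c ^ 2 - κ := Real.sq_sqrt hs.le
  rw [smul_dotProduct, dotProduct_smul, hpm, smul_eq_mul, smul_eq_mul,
    show 1 - κ / c ^ 2 = (c ^ 2 - κ) / c ^ 2 by field_simp, Real.sqrt_div hs.le,
    Real.sqrt_sq hc.le, ← hsqrt]
  field_simp [(Real.sqrt_pos.mpr hs).ne']
  simp only [hsqrt]

theorem stmt_6_general (d : Fin 3 → ℝ)
    (Rp : Matrix (Fin 3) (Fin 3) ℝ) (hRp : Rpᵀ * Rp = 1)
    (μ : Fin 3 → ℝ) (κ : ℝ) :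
    let Sm : Matrix (Fin 3) (Fin 3) ℝ := Matrix.diagonal d
    let Cov : Matrix (Fin 3) (Fin 3) ℝ := Rp * (Sm * Sm) * Rpᵀ
    let c : ℝ := Real.sqrt (μ ⬝ᵥ Cov⁻¹.mulVec μ)
    let τ : (Fin 3 → ℝ) → ℝ := fun x => (x ⬝ᵥ Cov⁻¹.mulVec μ) / (x ⬝ᵥ Cov⁻¹.mulVec x)
    let Dray : (Fin 3 → ℝ) → ℝ := fun x => (τ x • x - μ) ⬝ᵥ Cov⁻¹.mulVec (τ x • x - μ)
    let E : Set (Fin 3 → ℝ) := {p | ∃ x : Fin 3 → ℝ, x ≠ 0 ∧ Dray x = κ ∧ p = τ x • x}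
    let μhat : Fin 3 → ℝ := (1 / c) • (Sm⁻¹ * Rpᵀ).mulVec μ
    let b : ℝ := Real.sqrt (1 - κ / c ^ 2)
    0 < κ → κ < c ^ 2 →
      μhat ⬝ᵥ μhat = 1 ∧
      ∀ e ∈ E,
        let ehat : Fin 3 → ℝ := (Real.sqrt (c ^ 2 - κ))⁻¹ • (Sm⁻¹ * Rpᵀ).mulVec e
        ehat ⬝ᵥ ehat = 1 ∧ ehat ⬝ᵥ μhat = b := by
  intro Sm Cov c τ Dray E μhat b hκ hκc
  set A := Sm⁻¹ * Rpᵀ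
  have hwhite (x y : Fin 3 → ℝ) : x ⬝ᵥ Cov⁻¹ *ᵥ y = A *ᵥ x ⬝ᵥ A *ᵥ y := by
    rw [inv_conj_mul_self_eq_transpose_mul_self hRp (diagonal_transpose d),
      dotProduct_transpose_mul_self_mulVec]
  set m := A *ᵥ μ
  have hc : c = √(m ⬝ᵥ m) := by rw [← hwhite]
  have hmm : m ⬝ᵥ m = c ^ 2 := by
    rw [hc, Real.sq_sqrt (by simpa using dotProduct_self_star_nonneg m)]
  have hc_pos : 0 < c := by
    have : 0 ≤ c := Real.sqrt_nonneg _
    nlinarith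
  refine ⟨?_, ?_⟩
  · show ((1 / c) • m) ⬝ᵥ ((1 / c) • m) = 1
    rw [one_div, hc]
    exact inv_sqrt_smul_dotProduct_self rfl (by linarith)
  rintro _ ⟨x, -, hD, rfl⟩ ehat
  have hproj : A *ᵥ (τ x • x) = lineProj (A *ᵥ x) m := by
    rw [mulVec_smul, lineProj, ← hwhite, ← hwhite]
  have hpm : lineProj (A *ᵥ x) m ⬝ᵥ m = c ^ 2 - κ := by
    have hD' : Dray x = m ⬝ᵥ m - lineProj (A *ᵥ x) m ⬝ᵥ m := by
      rw [← sub_lineProj_dotProduct_self, ← hproj, ← mulVec_sub]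
      exact hwhite _ _
    linarith
  refine ⟨?_, ?_⟩ <;> simp only [ehat, μhat, hproj]
  · exact inv_sqrt_smul_dotProduct_self ((lineProj_dotProduct_self _ _).trans hpm) (by linarith)
  · exact inv_sqrt_smul_dotProduct_one_div_smul hc_pos hκc hpm

/-- Isomorphism step: `μ̂ = (1/c)S⁻¹R_pᵀμ` is a unit vector and for every `e` in
the boundary set `E`, `ê = (c²−κ)^{−1/2}S⁻¹R_pᵀe` is a unit vector with
`êᵀμ̂ = b = √(1 − κ/c²)`, i.e. all the `ê` lie on a circle embedded in the
unit sphere. -/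
theorem stmt_6 (d : Fin 3 → ℝ) (hd : ∀ i, 0 < d i)
    (Rp : Matrix (Fin 3) (Fin 3) ℝ) (hRp : Rpᵀ * Rp = 1) (hRpdet : Rp.det = 1)
    (μ : Fin 3 → ℝ) (hμ : μ ≠ 0) (κ : ℝ) :
    let Sm : Matrix (Fin 3) (Fin 3) ℝ := Matrix.diagonal d
    let Cov : Matrix (Fin 3) (Fin 3) ℝ := Rp * (Sm * Sm) * Rpᵀ
    let c : ℝ := Real.sqrt (μ ⬝ᵥ Cov⁻¹.mulVec μ)
    let τ : (Fin 3 → ℝ) → ℝ := fun x => (x ⬝ᵥ Cov⁻¹.mulVec μ) / (x ⬝ᵥ Cov⁻¹.mulVec x)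
    let Dray : (Fin 3 → ℝ) → ℝ := fun x => (τ x • x - μ) ⬝ᵥ Cov⁻¹.mulVec (τ x • x - μ)
    let E : Set (Fin 3 → ℝ) := {p | ∃ x : Fin 3 → ℝ, x ≠ 0 ∧ Dray x = κ ∧ p = τ x • x}
    let μhat : Fin 3 → ℝ := (1 / c) • (Sm⁻¹ * Rpᵀ).mulVec μ
    let b : ℝ := Real.sqrt (1 - κ / c ^ 2)
    0 < κ → κ < c ^ 2 →
      μhat ⬝ᵥ μhat = 1 ∧
      ∀ e ∈ E,
        let ehat : Fin 3 → ℝ := (Real.sqrt (c ^ 2 - κ))⁻¹ • (Sm⁻¹ * Rpᵀ).mulVec e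
        ehat ⬝ᵥ ehat = 1 ∧ ehat ⬝ᵥ μhat = b :=
  stmt_6_general d Rp hRp μ κ
end

section
/- Let μ̂ ∈ ℝ³ be a unit vector, v := (0,0,1), and P := diag(−1, 1, −1). Define R_{μ̂←v} := R_{μ̂,v} if μ̂ᵀv ≥ 0, and R_{μ̂←v} := R_{μ̂,−v}·P otherwise. Then R_{μ̂←v} is well defined (the denominators in the Rodrigues formula are nonzero in each branch), it is a rotation matrix (orthogonal with determinant 1), and it satisfies R_{μ̂←v} v = μ̂. -/
open Matrix

/-- The matrix `R_{x,y} = 2(x+y)(x+y)ᵀ/((x+y)ᵀ(x+y)) − I`. -/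
noncomputable def Rxy (x y : Fin 3 → ℝ) : Matrix (Fin 3) (Fin 3) ℝ :=
  (2 / ((x + y) ⬝ᵥ (x + y))) • vecMulVec (x + y) (x + y) - 1

/-!
`R_{x,y}` is the reflection in the line through `x + y` (in dimension three, the half-turn
about `x + y`): it fixes `x + y` and negates its orthogonal complement, so it is an involutive
orthogonal map with determinant `(-1)^(3-1) = 1`, and for unit vectors it sends
`y = ((x + y) - (x - y))/2` to `x`, since `x - y ⊥ x + y`. When `μ̂ᵀv < 0` the axis `μ̂ + v` may
vanish, so one reflects `-v` to `μ̂` instead and precomposes with the rotation `P`, which sends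
`v` to `-v`.
-/

namespace Matrix

variable {n K : Type*} [Fintype n] [DecidableEq n] [Field K]

noncomputable def lineReflection (w : n → K) : Matrix n n K :=
  (2 / (w ⬝ᵥ w)) • vecMulVec w w - 1

theorem transpose_lineReflection (w : n → K) : (lineReflection w)ᵀ = lineReflection w := by
  simp [lineReflection]

theorem lineReflection_mul_self {w : n → K} (hw : w ⬝ᵥ w ≠ 0) :
    lineReflection w * lineReflection w = 1 := by
  have hsq : vecMulVec w w * vecMulVec w w = (w ⬝ᵥ w) • vecMulVec w w := by
    rw [vecMulVec_mul_vecMulVec, vecMulVec_smul]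
  have hcoeff : 2 / (w ⬝ᵥ w) * (2 / (w ⬝ᵥ w)) * (w ⬝ᵥ w) = 2 * (2 / (w ⬝ᵥ w)) := by
    field_simp
  simp only [lineReflection, sub_mul, mul_sub, smul_mul_smul, hsq, smul_smul, hcoeff, mul_one,
    one_mul]
  rw [two_mul, add_smul]
  abel

theorem lineReflection_mem_orthogonalGroup {w : n → K} (hw : w ⬝ᵥ w ≠ 0) :
    lineReflection w ∈ orthogonalGroup n K := by
  rw [mem_orthogonalGroup_iff', transpose_lineReflection, lineReflection_mul_self hw]

theorem det_lineReflection {w : n → K} (hw : w ⬝ᵥ w ≠ 0) :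
    (lineReflection w).det = (-1) ^ (Fintype.card n + 1) := by
  have hneg : lineReflection w =
      -(1 - replicateCol Unit ((2 / (w ⬝ᵥ w)) • w) * replicateRow Unit w) := by
    rw [← vecMulVec_eq, smul_vecMulVec, lineReflection, neg_sub]
  rw [hneg, det_neg, det_one_sub_mul_comm, det_unique, Matrix.sub_apply, one_apply_eq,
    replicateRow_mul_replicateCol_apply, dotProduct_smul, smul_eq_mul, div_mul_cancel₀ _ hw,
    pow_succ]
  norm_num

theorem lineReflection_add_mulVec {x y : n → K} (hxy : x ⬝ᵥ x = y ⬝ᵥ y)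
    (hd : (x + y) ⬝ᵥ (x + y) ≠ 0) : lineReflection (x + y) *ᵥ y = x := by
  have hd' : (x + y) ⬝ᵥ (x + y) = 2 * ((x + y) ⬝ᵥ y) := by
    simp only [add_dotProduct, dotProduct_add, dotProduct_comm y x, hxy]
    ring
  have hcoeff : 2 / ((x + y) ⬝ᵥ (x + y)) * ((x + y) ⬝ᵥ y) = 1 := by
    rw [div_mul_eq_mul_div, div_eq_one_iff_eq hd, hd']
  rw [lineReflection, sub_mulVec, smul_mulVec, vecMulVec_mulVec, op_smul_eq_smul, one_mulVec,
    smul_smul, hcoeff, one_smul, add_sub_cancel_right]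

end Matrix

theorem dotProduct_add_self_ne_zero {n R : Type*} [Fintype n] [Ring R] [LinearOrder R]
    [IsStrictOrderedRing R] {x y : n → R} (hx : 0 < x ⬝ᵥ x) (hxy : 0 ≤ x ⬝ᵥ y) :
    (x + y) ⬝ᵥ (x + y) ≠ 0 := by
  intro h
  rw [eq_neg_of_add_eq_zero_right (dotProduct_self_eq_zero.mp h), dotProduct_neg] at hxy
  exact (neg_nonneg.mp hxy).not_gt hx

theorem Rxy_eq_lineReflection (x y : Fin 3 → ℝ) : Rxy x y = lineReflection (x + y) := rfl

theorem Rxy_mem_specialOrthogonalGroup {x y : Fin 3 → ℝ} (hd : (x + y) ⬝ᵥ (x + y) ≠ 0) :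
    Rxy x y ∈ specialOrthogonalGroup (Fin 3) ℝ :=
  mem_specialOrthogonalGroup_iff.mpr ⟨lineReflection_mem_orthogonalGroup hd, by
    rw [Rxy_eq_lineReflection, det_lineReflection hd]; norm_num⟩

theorem Rxy_mulVec {x y : Fin 3 → ℝ} (hxy : x ⬝ᵥ x = y ⬝ᵥ y)
    (hd : (x + y) ⬝ᵥ (x + y) ≠ 0) : Rxy x y *ᵥ y = x :=
  lineReflection_add_mulVec hxy hd

theorem diagonal_neg_one_one_neg_one_mem_specialOrthogonalGroup :
    diagonal ![-1, 1, -1] ∈ specialOrthogonalGroup (Fin 3) ℝ := by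
  refine mem_specialOrthogonalGroup_iff.mpr ⟨(mem_orthogonalGroup_iff' _ _).mpr ?_, ?_⟩
  · rw [diagonal_transpose, diagonal_mul_diagonal, ← diagonal_one]
    congr 1
    ext i; fin_cases i <;> norm_num
  · simp [det_diagonal, Fin.prod_univ_three]

/-- The rotation `R_{μ̂←v}` aligning `v = (0,0,1)` with a unit vector `μ̂` is well
defined (denominators nonzero in each branch), orthogonal with determinant 1,
and satisfies `R_{μ̂←v} v = μ̂`. -/
theorem stmt_8 (μhat : Fin 3 → ℝ) (hμ : μhat ⬝ᵥ μhat = 1) :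
    let v : Fin 3 → ℝ := ![0, 0, 1]
    let P : Matrix (Fin 3) (Fin 3) ℝ := Matrix.diagonal ![-1, 1, -1]
    let R : Matrix (Fin 3) (Fin 3) ℝ :=
      if 0 ≤ μhat ⬝ᵥ v then Rxy μhat v else Rxy μhat (-v) * P
    (0 ≤ μhat ⬝ᵥ v → (μhat + v) ⬝ᵥ (μhat + v) ≠ 0) ∧
    (¬ 0 ≤ μhat ⬝ᵥ v → (μhat + -v) ⬝ᵥ (μhat + -v) ≠ 0) ∧
    Rᵀ * R = 1 ∧ R.det = 1 ∧ R.mulVec v = μhat := by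
  intro v P R
  have hv : v ⬝ᵥ v = 1 := by simp [v, dotProduct, Fin.sum_univ_three]
  have hPv : P *ᵥ v = -v := by
    ext i; fin_cases i <;> simp [P, v, mulVec_diagonal]
  have hpos : 0 ≤ μhat ⬝ᵥ v → (μhat + v) ⬝ᵥ (μhat + v) ≠ 0 :=
    dotProduct_add_self_ne_zero (hμ ▸ one_pos)
  have hneg : ¬ 0 ≤ μhat ⬝ᵥ v → (μhat + -v) ⬝ᵥ (μhat + -v) ≠ 0 := fun h =>
    dotProduct_add_self_ne_zero (hμ ▸ one_pos) (by rw [dotProduct_neg]; linarith)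
  have hR : R ∈ specialOrthogonalGroup (Fin 3) ℝ ∧ R *ᵥ v = μhat := by
    by_cases h : 0 ≤ μhat ⬝ᵥ v
    · simp only [R, if_pos h]
      exact ⟨Rxy_mem_specialOrthogonalGroup (hpos h), Rxy_mulVec (hμ.trans hv.symm) (hpos h)⟩
    · simp only [R, if_neg h]
      refine ⟨mul_mem (Rxy_mem_specialOrthogonalGroup (hneg h))
        diagonal_neg_one_one_neg_one_mem_specialOrthogonalGroup, ?_⟩
      rw [← mulVec_mulVec, hPv,
        Rxy_mulVec (by rw [hμ, dotProduct_neg, neg_dotProduct, neg_neg, hv]) (hneg h)]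
  obtain ⟨⟨horth, hdet⟩, hRv⟩ := hR
  exact ⟨hpos, hneg, (mem_orthogonalGroup_iff' _ _).mp horth, hdet, hRv⟩
end

section
/- Let S be a 3×3 diagonal matrix with positive diagonal entries, R_p a 3×3 rotation matrix, Σ := R_p S² R_pᵀ, μ ∈ ℝ³ nonzero, c := √(μᵀΣ⁻¹μ), and 0 < κ < c². Let R₀ be any rotation matrix with R₀v = μ̂, where μ̂ := (1/c)S⁻¹R_pᵀμ and v := (0,0,1), and set Q := R_p S R₀, a := √(κ/(c²−κ)). Then the boundary set E equals the image of the unit circle under Φ⁻¹, i.e., E = { ((c² − κ)/c) · Q · H(a·u) : u ∈ ℝ², ‖u‖ = 1 }; in particular E is a 2D ellipse embedded in 3D space, isomorphic to the unit circle. -/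
/-! The point `τ(x) x` is the `Σ⁻¹`-orthogonal projection `p` of `μ` onto the line through `x`,
so `p ⬝ Σ⁻¹ p = p ⬝ Σ⁻¹ μ` and, by Pythagoras, `D_ray(x) = μ ⬝ Σ⁻¹ μ - p ⬝ Σ⁻¹ p`. Hence `E` is the
intersection of the ellipsoid `p ⬝ Σ⁻¹ p = c² - κ` with the plane `p ⬝ Σ⁻¹ μ = c² - κ`.
Writing `p = Q z` whitens `Σ⁻¹` (as `Σ = Q Qᵀ`) and sends `μ` to `c v`, so in the coordinates `z`
this is the horizontal circle `‖z‖² = c² - κ`, `z₃ = (c² - κ) / c`, of radius `a (c² - κ) / c`. -/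

open Matrix

section RayBoundary

variable {ι : Type*} [Fintype ι] (G : Matrix ι ι ℝ) (μ : ι → ℝ)

noncomputable def rayScale (x : ι → ℝ) : ℝ := (x ⬝ᵥ G *ᵥ μ) / (x ⬝ᵥ G *ᵥ x)

def rayBoundary (κ : ℝ) : Set (ι → ℝ) :=
  {p | ∃ x, x ≠ 0 ∧
    (rayScale G μ x • x - μ) ⬝ᵥ G *ᵥ (rayScale G μ x • x - μ) = κ ∧ p = rayScale G μ x • x}

variable {G}

lemma Matrix.IsSymm.dotProduct_sub_mulVec_sub (hG : G.IsSymm) (p : ι → ℝ) :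
    (p - μ) ⬝ᵥ G *ᵥ (p - μ) = p ⬝ᵥ G *ᵥ p - 2 * (p ⬝ᵥ G *ᵥ μ) + μ ⬝ᵥ G *ᵥ μ := by
  have hsymm : μ ⬝ᵥ G *ᵥ p = p ⬝ᵥ G *ᵥ μ := by
    rw [dotProduct_mulVec, ← mulVec_transpose, hG.eq, dotProduct_comm]
  simp only [mulVec_sub, sub_dotProduct, dotProduct_sub, hsymm]
  ring

-- also when `x ⬝ᵥ G *ᵥ x = 0`, where the division makes `rayScale G μ x = 0`
lemma dotProduct_mulVec_rayScale_smul (x : ι → ℝ) :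
    (rayScale G μ x • x) ⬝ᵥ G *ᵥ (rayScale G μ x • x) = (rayScale G μ x • x) ⬝ᵥ G *ᵥ μ := by
  simp only [mulVec_smul, smul_dotProduct, dotProduct_smul, smul_eq_mul, rayScale]
  rcases eq_or_ne (x ⬝ᵥ G *ᵥ x) 0 with h | h
  · simp [h]
  · field_simp

lemma mem_rayBoundary_iff (hG : G.IsSymm) {κ : ℝ} (hκ : κ ≠ μ ⬝ᵥ G *ᵥ μ) (p : ι → ℝ) :
    p ∈ rayBoundary G μ κ ↔
      p ⬝ᵥ G *ᵥ p = μ ⬝ᵥ G *ᵥ μ - κ ∧ p ⬝ᵥ G *ᵥ μ = μ ⬝ᵥ G *ᵥ μ - κ := by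
  constructor
  · rintro ⟨x, -, hD, rfl⟩
    have hproj := dotProduct_mulVec_rayScale_smul (G := G) μ x
    rw [hG.dotProduct_sub_mulVec_sub] at hD
    constructor <;> linarith
  · rintro ⟨hpp, hpμ⟩
    have hr : μ ⬝ᵥ G *ᵥ μ - κ ≠ 0 := sub_ne_zero.mpr hκ.symm
    have hp : p ≠ 0 := by
      rintro rfl
      exact hr (by simpa using hpp.symm)
    have hscale : rayScale G μ p = 1 := by
      rw [rayScale, hpp, hpμ, div_self hr]
    refine ⟨p, hp, ?_, by rw [hscale, one_smul]⟩
    rw [hscale, one_smul, hG.dotProduct_sub_mulVec_sub, hpp, hpμ]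
    ring

lemma dotProduct_inv_mul_transpose_mulVec [DecidableEq ι] (Q : Matrix ι ι ℝ) (x y : ι → ℝ) :
    x ⬝ᵥ (Q * Qᵀ)⁻¹ *ᵥ y = Q⁻¹ *ᵥ x ⬝ᵥ Q⁻¹ *ᵥ y := by
  rw [Matrix.mul_inv_rev, ← transpose_nonsing_inv, ← mulVec_mulVec, dotProduct_mulVec,
    vecMul_transpose]

lemma mulVec_mem_rayBoundary_inv_mul_transpose_iff [DecidableEq ι] {Q : Matrix ι ι ℝ}
    (hQ : IsUnit Q.det) {κ : ℝ} (hκ : κ ≠ Q⁻¹ *ᵥ μ ⬝ᵥ Q⁻¹ *ᵥ μ) (z : ι → ℝ) :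
    Q *ᵥ z ∈ rayBoundary (Q * Qᵀ)⁻¹ μ κ ↔
      z ⬝ᵥ z = Q⁻¹ *ᵥ μ ⬝ᵥ Q⁻¹ *ᵥ μ - κ ∧ z ⬝ᵥ Q⁻¹ *ᵥ μ = Q⁻¹ *ᵥ μ ⬝ᵥ Q⁻¹ *ᵥ μ - κ := by
  rw [mem_rayBoundary_iff μ (isSymm_mul_transpose_self Q).inv
    (by rwa [dotProduct_inv_mul_transpose_mulVec])]
  simp only [dotProduct_inv_mul_transpose_mulVec]
  simp only [mulVec_mulVec, nonsing_inv_mul _ hQ, one_mulVec]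

end RayBoundary

section Whitening

variable {ι : Type*} [Fintype ι] [DecidableEq ι] {d : ι → ℝ} {Rp R0 : Matrix ι ι ℝ}

lemma isUnit_det_mul_diagonal_mul (hd : ∀ i, d i ≠ 0) (hRp : Rpᵀ * Rp = 1)
    (hR0 : R0ᵀ * R0 = 1) :
    IsUnit (Rp * diagonal d * R0).det := by
  have hD : IsUnit (diagonal d).det := by
    simpa [det_diagonal, Finset.prod_ne_zero_iff] using hd
  rw [det_mul, det_mul]
  exact ((isUnit_det_of_left_inverse hRp).mul hD).mul (isUnit_det_of_left_inverse hR0)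

lemma mul_diagonal_mul_self_mul_transpose (hR0 : R0ᵀ * R0 = 1) :
    Rp * (diagonal d * diagonal d) * Rpᵀ = Rp * diagonal d * R0 * (Rp * diagonal d * R0)ᵀ := by
  simp only [transpose_mul, diagonal_transpose, Matrix.mul_assoc, ← Matrix.mul_assoc R0,
    mul_eq_one_comm.mp hR0, Matrix.one_mul]

lemma inv_mul_diagonal_mul (hRp : Rpᵀ * Rp = 1) (hR0 : R0ᵀ * R0 = 1) :
    (Rp * diagonal d * R0)⁻¹ = R0ᵀ * ((diagonal d)⁻¹ * Rpᵀ) := by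
  rw [Matrix.mul_inv_rev, Matrix.mul_inv_rev, inv_eq_left_inv hR0, inv_eq_left_inv hRp]

end Whitening

lemma dotProduct_self_eq_and_apply_two_eq_iff {s a : ℝ} (hs : s ≠ 0) (ha : a ≠ 0)
    (z : Fin 3 → ℝ) :
    z ⬝ᵥ z = s ^ 2 * (1 + a ^ 2) ∧ z 2 = s ↔
      ∃ u : Fin 2 → ℝ, u ⬝ᵥ u = 1 ∧ z = s • ![a * u 0, a * u 1, 1] := by
  simp only [dotProduct, Fin.sum_univ_three, Fin.sum_univ_two]
  constructor
  · rintro ⟨hzz, hz2⟩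
    refine ⟨![z 0 / (s * a), z 1 / (s * a)], ?_, ?_⟩
    · simp only [cons_val_zero, cons_val_one]
      field_simp
      subst hz2
      linear_combination hzz
    · ext i
      fin_cases i <;> simp [hz2] <;> field_simp
  · rintro ⟨u, hu, rfl⟩
    simp only [Pi.smul_apply, cons_val_zero, cons_val_one, cons_val_two, smul_eq_mul, tail_cons,
      head_cons]
    constructor
    · linear_combination s ^ 2 * a ^ 2 * hu
    · ring

theorem stmt_10_general (d : Fin 3 → ℝ) (hd : ∀ i, 0 < d i)
    (Rp : Matrix (Fin 3) (Fin 3) ℝ) (hRp : Rpᵀ * Rp = 1)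
    (μ : Fin 3 → ℝ) (κ : ℝ)
    (R0 : Matrix (Fin 3) (Fin 3) ℝ) (hR0 : R0ᵀ * R0 = 1) :
    let Sm : Matrix (Fin 3) (Fin 3) ℝ := Matrix.diagonal d
    let Cov : Matrix (Fin 3) (Fin 3) ℝ := Rp * (Sm * Sm) * Rpᵀ
    let c : ℝ := Real.sqrt (μ ⬝ᵥ Cov⁻¹.mulVec μ)
    let μhat : Fin 3 → ℝ := (1 / c) • (Sm⁻¹ * Rpᵀ).mulVec μ
    let v : Fin 3 → ℝ := ![0, 0, 1]
    let τ : (Fin 3 → ℝ) → ℝ := fun x => (x ⬝ᵥ Cov⁻¹.mulVec μ) / (x ⬝ᵥ Cov⁻¹.mulVec x)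
    let Dray : (Fin 3 → ℝ) → ℝ := fun x => (τ x • x - μ) ⬝ᵥ Cov⁻¹.mulVec (τ x • x - μ)
    let E : Set (Fin 3 → ℝ) := {p | ∃ x : Fin 3 → ℝ, x ≠ 0 ∧ Dray x = κ ∧ p = τ x • x}
    let Q : Matrix (Fin 3) (Fin 3) ℝ := Rp * Sm * R0
    let a : ℝ := Real.sqrt (κ / (c ^ 2 - κ))
    0 < κ → κ < c ^ 2 → R0.mulVec v = μhat →
      E = {p | ∃ u : Fin 2 → ℝ, u ⬝ᵥ u = 1 ∧
            p = ((c ^ 2 - κ) / c) • Q.mulVec ![a * u 0, a * u 1, 1]} := by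
  intro Sm Cov c μhat v τ Dray E Q a hκ hκc hR0v
  have hc : c ≠ 0 := by rintro h; rw [h] at hκc; linarith
  have hr : 0 < c ^ 2 - κ := sub_pos.mpr hκc
  have hQ : IsUnit Q.det := isUnit_det_mul_diagonal_mul (fun i => (hd i).ne') hRp hR0
  have hQμ : Q⁻¹ *ᵥ μ = c • v := by
    have hμhat : (Sm⁻¹ * Rpᵀ) *ᵥ μ = c • R0 *ᵥ v := by
      rw [hR0v, smul_smul, mul_one_div_cancel hc, one_smul]
    rw [inv_mul_diagonal_mul hRp hR0, ← mulVec_mulVec, hμhat, mulVec_smul, mulVec_mulVec, hR0,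
      one_mulVec]
  have hcv : c • v ⬝ᵥ c • v = c ^ 2 := by simp [v, sq]
  ext p
  obtain ⟨z, rfl⟩ : ∃ z, p = Q *ᵥ z :=
    ⟨Q⁻¹ *ᵥ p, by rw [mulVec_mulVec, mul_nonsing_inv _ hQ, one_mulVec]⟩
  change Q *ᵥ z ∈ rayBoundary Cov⁻¹ μ κ ↔ _
  have hCov : Cov = Q * Qᵀ := mul_diagonal_mul_self_mul_transpose hR0
  rw [hCov, mulVec_mem_rayBoundary_inv_mul_transpose_iff μ hQ (by rw [hQμ, hcv]; exact hκc.ne),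
    hQμ, hcv]
  have hzv : z ⬝ᵥ c • v = c * z 2 := by simp [v, dotProduct, Fin.sum_univ_three, mul_comm]
  -- the circle of radius `(c² - κ) a / c` at height `(c² - κ) / c` has squared norm `c² - κ`
  have hcircle : c ^ 2 - κ = ((c ^ 2 - κ) / c) ^ 2 * (1 + a ^ 2) := by
    rw [Real.sq_sqrt (div_pos hκ hr).le]
    field_simp
    ring
  have ha : a ≠ 0 := (Real.sqrt_pos.mpr (div_pos hκ hr)).ne'
  simp only [Set.mem_ofPred_eq, ← mulVec_smul, (mulVec_injective_of_det_ne_zero hQ.ne_zero).eq_iff]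
  rw [← dotProduct_self_eq_and_apply_two_eq_iff (div_ne_zero hr.ne' hc) ha, ← hcircle, hzv,
    eq_div_iff hc, mul_comm]

/-- The boundary set `E` equals the image of the unit circle under
`Φ⁻¹(u) = ((c² − κ)/c)·Q·H(a·u)` with `Q = R_p S R₀`; i.e. `E` is a 2D ellipse
embedded in 3D space, isomorphic to the unit circle. -/
theorem stmt_10 (d : Fin 3 → ℝ) (hd : ∀ i, 0 < d i)
    (Rp : Matrix (Fin 3) (Fin 3) ℝ) (hRp : Rpᵀ * Rp = 1) (hRpdet : Rp.det = 1)
    (μ : Fin 3 → ℝ) (hμ : μ ≠ 0) (κ : ℝ)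
    (R0 : Matrix (Fin 3) (Fin 3) ℝ) (hR0 : R0ᵀ * R0 = 1) (hR0det : R0.det = 1) :
    let Sm : Matrix (Fin 3) (Fin 3) ℝ := Matrix.diagonal d
    let Cov : Matrix (Fin 3) (Fin 3) ℝ := Rp * (Sm * Sm) * Rpᵀ
    let c : ℝ := Real.sqrt (μ ⬝ᵥ Cov⁻¹.mulVec μ)
    let μhat : Fin 3 → ℝ := (1 / c) • (Sm⁻¹ * Rpᵀ).mulVec μ
    let v : Fin 3 → ℝ := ![0, 0, 1]
    let τ : (Fin 3 → ℝ) → ℝ := fun x => (x ⬝ᵥ Cov⁻¹.mulVec μ) / (x ⬝ᵥ Cov⁻¹.mulVec x)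
    let Dray : (Fin 3 → ℝ) → ℝ := fun x => (τ x • x - μ) ⬝ᵥ Cov⁻¹.mulVec (τ x • x - μ)
    let E : Set (Fin 3 → ℝ) := {p | ∃ x : Fin 3 → ℝ, x ≠ 0 ∧ Dray x = κ ∧ p = τ x • x}
    let Q : Matrix (Fin 3) (Fin 3) ℝ := Rp * Sm * R0
    let a : ℝ := Real.sqrt (κ / (c ^ 2 - κ))
    0 < κ → κ < c ^ 2 → R0.mulVec v = μhat →
      E = {p | ∃ u : Fin 2 → ℝ, u ⬝ᵥ u = 1 ∧
            p = ((c ^ 2 - κ) / c) • Q.mulVec ![a * u 0, a * u 1, 1]} :=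
  stmt_10_general d hd Rp hRp μ κ R0 hR0
end

section
/- Let S be a 3×3 diagonal matrix with positive diagonal entries, R_p a 3×3 rotation matrix, Σ := R_p S² R_pᵀ, μ ∈ ℝ³ nonzero, c := √(μᵀΣ⁻¹μ), 0 < κ < c², and let R₀ be a rotation with R₀v = μ̂; set Q := R_p S R₀, Q_{0:2} its first two columns, b := √(1−κ/c²), a := √(κ/(c²−κ)). Let U ∈ ℝ^{2×2} be any matrix and O := [[−1,−1,1,1],[−1,1,1,−1]] ∈ ℝ^{2×4}. Then V_ray := (c²/(c²−κ)) · Φ⁻¹ applied column-wise to U·O equals T_ray · H(Z_ray), where Z_ray := (√κ/b)·O ∈ ℝ^{2×4}, T_ray := [Q_{0:2}·U, μ] ∈ ℝ^{3×3}, and H appends a row of ones; equivalently, c·Q·H(a·U·O) = Q_{0:2}·U·Z_ray + μ·1ᵀ. -/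
/-!
Both sides are affine in the columns of `U·O`: multiplying by a matrix with a row of ones appended
is `Q·H(M) = Q_{0:2}·M + q₂·1ᵀ`, where `q₂` is the last column of `Q`. The constants cancel to
`c²/(c²−κ) · (c²−κ)/c = c` and `√κ/b = c·a`, and `c·q₂ = μ` because `R₀v = μ̂` means
`Q v = (R_p S)(S⁻¹R_pᵀ μ)/c = μ/c`.
-/

open Matrix

namespace Matrix

variable {R m ι : Type*} [CommRing R]

def appendOnes (M : Matrix (Fin 2) ι R) : Matrix (Fin 3) ι R :=
  of fun i j => ![M 0 j, M 1 j, 1] i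

def firstTwoCols (Q : Matrix m (Fin 3) R) : Matrix m (Fin 2) R :=
  of fun i j => Q i j.castSucc

theorem mul_appendOnes [Fintype ι] (Q : Matrix m (Fin 3) R) (M : Matrix (Fin 2) ι R) :
    Q * appendOnes M = firstTwoCols Q * M + of fun i _ => Q i 2 := by
  ext i j
  simp [appendOnes, firstTwoCols, mul_apply, Fin.sum_univ_three, Fin.sum_univ_two]

theorem smul_mul_appendOnes_smul [Fintype ι] (Q : Matrix m (Fin 3) R) (M : Matrix (Fin 2) ι R)
    (c a : R) :
    c • (Q * appendOnes (a • M)) = firstTwoCols Q * ((c * a) • M) + of fun i _ => c * Q i 2 := by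
  rw [mul_appendOnes, smul_add, Matrix.mul_smul, Matrix.mul_smul, smul_smul]
  rfl

theorem mul_mul_mulVec_eq_of_mulVec_eq {n : Type*} [Fintype n] [DecidableEq n]
    {Rp S R0 : Matrix n n R} {v w : n → R} (hRp : Rpᵀ * Rp = 1) (hS : IsUnit S.det)
    (h : R0 *ᵥ v = (S⁻¹ * Rpᵀ) *ᵥ w) : (Rp * S * R0) *ᵥ v = w := by
  have hinv : Rp * S * (S⁻¹ * Rpᵀ) = 1 := by
    rw [Matrix.mul_assoc, ← Matrix.mul_assoc S, mul_nonsing_inv _ hS, Matrix.one_mul,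
      mul_eq_one_comm.mp hRp]
  rw [← mulVec_mulVec, h, mulVec_mulVec, hinv, one_mulVec]

end Matrix

theorem Real.sqrt_div_sqrt_one_sub_div_sq {c κ : ℝ} (hc : 0 < c) (hκ : 0 ≤ κ) (hκc : κ < c ^ 2) :
    √κ / √(1 - κ / c ^ 2) = c * √(κ / (c ^ 2 - κ)) := by
  have hck : 0 < c ^ 2 - κ := by linarith
  calc √κ / √(1 - κ / c ^ 2) = √(κ / (1 - κ / c ^ 2)) := (Real.sqrt_div hκ _).symm
    _ = √(c ^ 2 * (κ / (c ^ 2 - κ))) := by congr 1; field_simp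
    _ = c * √(κ / (c ^ 2 - κ)) := by rw [Real.sqrt_mul (sq_nonneg c), Real.sqrt_sq hc.le]

theorem stmt_12_general (d : Fin 3 → ℝ) (hd : ∀ i, 0 < d i)
    (Rp : Matrix (Fin 3) (Fin 3) ℝ) (hRp : Rpᵀ * Rp = 1)
    (μ : Fin 3 → ℝ) (κ : ℝ)
    (R0 : Matrix (Fin 3) (Fin 3) ℝ)
    (U : Matrix (Fin 2) (Fin 2) ℝ) :
    let Sm : Matrix (Fin 3) (Fin 3) ℝ := Matrix.diagonal d
    let Cov : Matrix (Fin 3) (Fin 3) ℝ := Rp * (Sm * Sm) * Rpᵀ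
    let c : ℝ := Real.sqrt (μ ⬝ᵥ Cov⁻¹.mulVec μ)
    let μhat : Fin 3 → ℝ := (1 / c) • (Sm⁻¹ * Rpᵀ).mulVec μ
    let v : Fin 3 → ℝ := ![0, 0, 1]
    let Q : Matrix (Fin 3) (Fin 3) ℝ := Rp * Sm * R0
    let Q02 : Matrix (Fin 3) (Fin 2) ℝ := Matrix.of fun i j => Q i j.castSucc
    let b : ℝ := Real.sqrt (1 - κ / c ^ 2)
    let a : ℝ := Real.sqrt (κ / (c ^ 2 - κ))
    let Φinv : (Fin 2 → ℝ) → (Fin 3 → ℝ) := fun u =>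
      ((c ^ 2 - κ) / c) • Q.mulVec ![a * u 0, a * u 1, 1]
    let O : Matrix (Fin 2) (Fin 4) ℝ := !![-1, -1, 1, 1; -1, 1, 1, -1]
    -- `H` appends a row of ones to a `2 × 4` matrix
    let HM : Matrix (Fin 2) (Fin 4) ℝ → Matrix (Fin 3) (Fin 4) ℝ := fun M =>
      Matrix.of fun i j => ![M 0 j, M 1 j, 1] i
    let Zray : Matrix (Fin 2) (Fin 4) ℝ := (Real.sqrt κ / b) • O
    let Vray : Matrix (Fin 3) (Fin 4) ℝ :=
      Matrix.of fun i j => ((c ^ 2 / (c ^ 2 - κ)) • Φinv (fun k => (U * O) k j)) i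
    let Tray : Matrix (Fin 3) (Fin 3) ℝ :=
      Matrix.of fun i j => ![(Q02 * U) i 0, (Q02 * U) i 1, μ i] j
    0 < κ → κ < c ^ 2 → R0.mulVec v = μhat →
      Vray = Tray * HM Zray ∧
      c • (Q * HM (a • (U * O))) =
        Q02 * U * Zray + Matrix.of (fun i (_ : Fin 4) => μ i) := by
  intro Sm Cov c μhat v Q Q02 b a Φinv O HM Zray Vray Tray hκ hκc hR0v
  have hc : 0 < c := by
    have := Real.sqrt_nonneg (μ ⬝ᵥ Cov⁻¹ *ᵥ μ)
    nlinarith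
  have hca : √κ / b = c * a := Real.sqrt_div_sqrt_one_sub_div_sq hc hκ.le hκc
  have hS : IsUnit Sm.det := by
    rw [det_diagonal]; exact (Finset.prod_pos fun i _ => hd i).ne'.isUnit
  have hQv : Q *ᵥ Pi.single 2 1 = (1 / c) • μ := by
    refine mul_mul_mulVec_eq_of_mulVec_eq hRp hS ?_
    rw [show Pi.single 2 1 = v by ext i; fin_cases i <;> rfl, hR0v, mulVec_smul]
  have hQ2 : ∀ i, c * Q i 2 = μ i := by
    rw [mulVec_single_one] at hQv
    intro i
    simp [show Q i 2 = 1 / c * μ i from congrFun hQv i, hc.ne']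
  have hV : Vray = c • (Q * HM (a • (U * O))) := by
    have hscale : c ^ 2 / (c ^ 2 - κ) * ((c ^ 2 - κ) / c) = c := by
      field_simp [(sub_pos.mpr hκc).ne']
    ext i j
    simp only [Vray, Φinv, smul_smul, hscale]
    rfl
  have hT : Tray * HM Zray = Q02 * U * Zray + of fun i _ => μ i := by
    have hcols : firstTwoCols Tray = Q02 * U := by
      ext i j; fin_cases j <;> rfl
    rw [show HM Zray = appendOnes Zray from rfl, mul_appendOnes, hcols]
    rfl
  have hQ : c • (Q * HM (a • (U * O))) = Q02 * U * Zray + of fun i _ => μ i := by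
    rw [show HM (a • (U * O)) = appendOnes (a • (U * O)) from rfl, smul_mul_appendOnes_smul,
      show Zray = (c * a) • O by rw [← hca], Matrix.mul_assoc, Matrix.mul_smul U]
    simp only [hQ2]
    rfl
  exact ⟨hV.trans (hQ.trans hT.symm), hQ⟩

/-- The quad vertices `V_ray = (c²/(c²−κ))·Φ⁻¹(U·O)` (applied column-wise)
equal `T_ray·H(Z_ray)` with `Z_ray = (√κ/b)·O` and `T_ray = [Q_{0:2}U, μ]`;
equivalently, `c·Q·H(a·U·O) = Q_{0:2}·U·Z_ray + μ·1ᵀ`. -/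
theorem stmt_12 (d : Fin 3 → ℝ) (hd : ∀ i, 0 < d i)
    (Rp : Matrix (Fin 3) (Fin 3) ℝ) (hRp : Rpᵀ * Rp = 1) (hRpdet : Rp.det = 1)
    (μ : Fin 3 → ℝ) (hμ : μ ≠ 0) (κ : ℝ)
    (R0 : Matrix (Fin 3) (Fin 3) ℝ) (hR0 : R0ᵀ * R0 = 1) (hR0det : R0.det = 1)
    (U : Matrix (Fin 2) (Fin 2) ℝ) :
    let Sm : Matrix (Fin 3) (Fin 3) ℝ := Matrix.diagonal d
    let Cov : Matrix (Fin 3) (Fin 3) ℝ := Rp * (Sm * Sm) * Rpᵀ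
    let c : ℝ := Real.sqrt (μ ⬝ᵥ Cov⁻¹.mulVec μ)
    let μhat : Fin 3 → ℝ := (1 / c) • (Sm⁻¹ * Rpᵀ).mulVec μ
    let v : Fin 3 → ℝ := ![0, 0, 1]
    let Q : Matrix (Fin 3) (Fin 3) ℝ := Rp * Sm * R0
    let Q02 : Matrix (Fin 3) (Fin 2) ℝ := Matrix.of fun i j => Q i j.castSucc
    let b : ℝ := Real.sqrt (1 - κ / c ^ 2)
    let a : ℝ := Real.sqrt (κ / (c ^ 2 - κ))
    let Φinv : (Fin 2 → ℝ) → (Fin 3 → ℝ) := fun u =>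
      ((c ^ 2 - κ) / c) • Q.mulVec ![a * u 0, a * u 1, 1]
    let O : Matrix (Fin 2) (Fin 4) ℝ := !![-1, -1, 1, 1; -1, 1, 1, -1]
    -- `H` appends a row of ones to a `2 × 4` matrix
    let HM : Matrix (Fin 2) (Fin 4) ℝ → Matrix (Fin 3) (Fin 4) ℝ := fun M =>
      Matrix.of fun i j => ![M 0 j, M 1 j, 1] i
    let Zray : Matrix (Fin 2) (Fin 4) ℝ := (Real.sqrt κ / b) • O
    let Vray : Matrix (Fin 3) (Fin 4) ℝ :=
      Matrix.of fun i j => ((c ^ 2 / (c ^ 2 - κ)) • Φinv (fun k => (U * O) k j)) i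
    let Tray : Matrix (Fin 3) (Fin 3) ℝ :=
      Matrix.of fun i j => ![(Q02 * U) i 0, (Q02 * U) i 1, μ i] j
    0 < κ → κ < c ^ 2 → R0.mulVec v = μhat →
      Vray = Tray * HM Zray ∧
      c • (Q * HM (a • (U * O))) =
        Q02 * U * Zray + Matrix.of (fun i (_ : Fin 4) => μ i) :=
  stmt_12_general d hd Rp hRp μ κ R0 U
end

section
/- Let S be a 3×3 diagonal matrix with positive diagonal entries, R_p a 3×3 rotation matrix, Σ := R_p S² R_pᵀ, μ ∈ ℝ³ nonzero, c := √(μᵀΣ⁻¹μ), and let R₀ be any orthogonal matrix with R₀v = μ̂, where μ̂ := (1/c)S⁻¹R_pᵀμ and v := (0,0,1); set Q := R_p S R₀ with first two columns Q_{0:2} ∈ ℝ^{3×2}. Then for every nonzero w ∈ ℝ², the point x := Q_{0:2}·w + μ is nonzero and satisfies D_ray(x; μ, Σ) = 1/(c^{−2} + ‖w‖^{−2}); moreover for w = 0 one has D_ray(μ; μ, Σ) = 0. -/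
open Matrix

private lemma dp_conj (M : Matrix (Fin 3) (Fin 3) ℝ) (a b : Fin 3 → ℝ) :
    a ⬝ᵥ (Mᵀ * M).mulVec b = (M.mulVec a) ⬝ᵥ (M.mulVec b) := by
  rw [← mulVec_mulVec, dotProduct_mulVec, vecMul_transpose]

/-- Fragment shader formula: for every nonzero `w ∈ ℝ²`, the point
`x = Q_{0:2}w + μ` is nonzero and `D_ray(x; μ, Σ) = 1/(c⁻² + ‖w‖⁻²)`;
moreover for `w = 0` one has `D_ray(μ; μ, Σ) = 0`. -/
theorem stmt_13 (d : Fin 3 → ℝ) (hd : ∀ i, 0 < d i)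
    (Rp : Matrix (Fin 3) (Fin 3) ℝ) (hRp : Rpᵀ * Rp = 1) (hRpdet : Rp.det = 1)
    (μ : Fin 3 → ℝ) (hμ : μ ≠ 0)
    (R0 : Matrix (Fin 3) (Fin 3) ℝ) (hR0 : R0ᵀ * R0 = 1) :
    let Sm : Matrix (Fin 3) (Fin 3) ℝ := Matrix.diagonal d
    let Cov : Matrix (Fin 3) (Fin 3) ℝ := Rp * (Sm * Sm) * Rpᵀ
    let c : ℝ := Real.sqrt (μ ⬝ᵥ Cov⁻¹.mulVec μ)
    let μhat : Fin 3 → ℝ := (1 / c) • (Sm⁻¹ * Rpᵀ).mulVec μ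
    let v : Fin 3 → ℝ := ![0, 0, 1]
    let Q : Matrix (Fin 3) (Fin 3) ℝ := Rp * Sm * R0
    let Q02 : Matrix (Fin 3) (Fin 2) ℝ := Matrix.of fun i j => Q i j.castSucc
    let τ : (Fin 3 → ℝ) → ℝ := fun x => (x ⬝ᵥ Cov⁻¹.mulVec μ) / (x ⬝ᵥ Cov⁻¹.mulVec x)
    let Dray : (Fin 3 → ℝ) → ℝ := fun x => (τ x • x - μ) ⬝ᵥ Cov⁻¹.mulVec (τ x • x - μ)
    R0.mulVec v = μhat →
      (∀ w : Fin 2 → ℝ, w ≠ 0 →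
        Q02.mulVec w + μ ≠ 0 ∧
        Dray (Q02.mulVec w + μ) = 1 / ((c ^ 2)⁻¹ + (w ⬝ᵥ w)⁻¹)) ∧
      Dray μ = 0 := by
  intro Sm Cov c μhat v Q Q02 τ Dray hv
  have hdne : ∀ i, d i ≠ 0 := fun i => (hd i).ne'
  set T : Matrix (Fin 3) (Fin 3) ℝ := Matrix.diagonal (fun i => (d i)⁻¹) with hT
  have hST : Sm * T = 1 := by
    rw [hT]
    show Matrix.diagonal d * Matrix.diagonal _ = 1
    rw [Matrix.diagonal_mul_diagonal]
    have : (fun i => d i * (d i)⁻¹) = fun _ : Fin 3 => (1:ℝ) := by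
      funext i; exact mul_inv_cancel₀ (hdne i)
    rw [this, Matrix.diagonal_one]
  have hTS : T * Sm = 1 := mul_eq_one_comm.mp hST
  have hSmInv : Sm⁻¹ = T := Matrix.inv_eq_right_inv hST
  have hRpRpT : Rp * Rpᵀ = 1 := mul_eq_one_comm.mp hRp
  -- Cov⁻¹ = Bᵀ * B with B := T * Rpᵀ
  set B : Matrix (Fin 3) (Fin 3) ℝ := T * Rpᵀ with hB
  have hTt : Tᵀ = T := Matrix.diagonal_transpose _
  have hBtB : Bᵀ * B = Rp * (T * T) * Rpᵀ := by
    rw [hB, Matrix.transpose_mul, hTt, Matrix.transpose_transpose]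
    noncomm_ring
  have hCovB : Cov * (Bᵀ * B) = 1 := by
    show Rp * (Sm * Sm) * Rpᵀ * (Bᵀ * B) = 1
    rw [hBtB]
    calc Rp * (Sm * Sm) * Rpᵀ * (Rp * (T * T) * Rpᵀ)
        = Rp * (Sm * ((Sm * (Rpᵀ * Rp)) * T) * T) * Rpᵀ := by noncomm_ring
      _ = 1 := by rw [hRp, Matrix.mul_one, hST, Matrix.mul_one, hST, Matrix.mul_one, hRpRpT]
  have hCovInv : Cov⁻¹ = Bᵀ * B := Matrix.inv_eq_right_inv hCovB
  -- the bilinear form in Q-coordinates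
  have hBQ : B * Q = R0 := by
    show T * Rpᵀ * (Rp * Sm * R0) = R0
    calc T * Rpᵀ * (Rp * Sm * R0) = (T * ((Rpᵀ * Rp) * Sm)) * R0 := by noncomm_ring
      _ = R0 := by rw [hRp, Matrix.one_mul, hTS, Matrix.one_mul]
  have key : ∀ a b : Fin 3 → ℝ,
      (Q.mulVec a) ⬝ᵥ Cov⁻¹.mulVec (Q.mulVec b) = a ⬝ᵥ b := by
    intro a b
    rw [hCovInv, dp_conj, Matrix.mulVec_mulVec, Matrix.mulVec_mulVec, hBQ,
      ← dp_conj, hR0, Matrix.one_mulVec]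
  -- c is positive
  have hm : B.mulVec μ ≠ 0 := by
    intro h
    apply hμ
    have : (Rp * Sm).mulVec (B.mulVec μ) = μ := by
      rw [Matrix.mulVec_mulVec]
      calc (Rp * Sm * B).mulVec μ = (Rp * ((Sm * T) * Rpᵀ)).mulVec μ := by noncomm_ring
        _ = μ := by rw [hST, Matrix.one_mul, hRpRpT, Matrix.one_mulVec]
    rw [← this, h, Matrix.mulVec_zero]
  have hμAμ : μ ⬝ᵥ Cov⁻¹.mulVec μ = (B.mulVec μ) ⬝ᵥ (B.mulVec μ) := by
    rw [hCovInv, dp_conj]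
  have hμAμpos : 0 < μ ⬝ᵥ Cov⁻¹.mulVec μ := by
    rw [hμAμ]
    have hnn : 0 ≤ (B.mulVec μ) ⬝ᵥ (B.mulVec μ) :=
      Finset.sum_nonneg fun i _ => mul_self_nonneg _
    exact hnn.lt_of_ne fun h => hm (dotProduct_self_eq_zero.mp h.symm)
  have hc : 0 < c := Real.sqrt_pos.mpr hμAμpos
  have hc2 : c ^ 2 = μ ⬝ᵥ Cov⁻¹.mulVec μ := Real.sq_sqrt hμAμpos.le
  have hRSB : (Rp * Sm).mulVec (B.mulVec μ) = μ := by
    rw [Matrix.mulVec_mulVec]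
    calc (Rp * Sm * B).mulVec μ = (Rp * ((Sm * T) * Rpᵀ)).mulVec μ := by noncomm_ring
      _ = μ := by rw [hST, Matrix.one_mul, hRpRpT, Matrix.one_mulVec]
  have hμQ : Q.mulVec (c • v) = μ := by
    show (Rp * Sm * R0).mulVec (c • v) = μ
    rw [Matrix.mulVec_smul, ← Matrix.mulVec_mulVec, hv]
    show c • (Rp * Sm).mulVec ((1 / c) • (Sm⁻¹ * Rpᵀ).mulVec μ) = μ
    rw [hSmInv, Matrix.mulVec_smul, hRSB, smul_smul]
    rw [mul_one_div, div_self hc.ne', one_smul]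
  -- pass to u-coordinates
  have hμAμ2 : μ ⬝ᵥ Cov⁻¹.mulVec μ = c ^ 2 := hc2.symm
  have hQ02 : ∀ wv : Fin 2 → ℝ,
      Q02.mulVec wv + μ = Q.mulVec ![wv 0, wv 1, c] := by
    intro wv
    have : Q02.mulVec wv = Q.mulVec ![wv 0, wv 1, 0] := by
      funext i
      show (fun j => Q02 i j) ⬝ᵥ wv = (fun j => Q i j) ⬝ᵥ ![wv 0, wv 1, 0]
      simp [dotProduct, Fin.sum_univ_two, Fin.sum_univ_three, Q02]
    rw [this, ← hμQ, ← Matrix.mulVec_add]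
    congr 1
    funext i
    fin_cases i <;> simp [v]
  constructor
  · intro w hw
    set u : Fin 3 → ℝ := ![w 0, w 1, c] with hu
    set x : Fin 3 → ℝ := Q.mulVec u with hx
    have hxdef : Q02.mulVec w + μ = x := hQ02 w
    set W : ℝ := w 0 ^ 2 + w 1 ^ 2 with hW
    have hwW : w ⬝ᵥ w = W := by simp [dotProduct, Fin.sum_univ_two, hW]; ring
    have hWpos : 0 < W := by
      rcases Classical.em (w 0 = 0) with h0 | h0
      · have h1 : w 1 ≠ 0 := by
          intro h1; apply hw; funext j; fin_cases j <;> assumption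
        have := pow_pos (abs_pos.mpr h1) 2
        rw [hW, h0]
        nlinarith [sq_nonneg (w 1), sq_abs (w 1)]
      · nlinarith [sq_nonneg (w 0), sq_nonneg (w 1), sq_abs (w 0), abs_pos.mpr h0]
    have huu : u ⬝ᵥ u = W + c ^ 2 := by
      simp [dotProduct, Fin.sum_univ_three, hu, hW]; ring
    have huμ : x ⬝ᵥ Cov⁻¹.mulVec μ = c ^ 2 := by
      rw [hx, ← hμQ, key]
      simp [dotProduct, Fin.sum_univ_three, hu, v, smul_eq_mul]
      ring
    have hμx : μ ⬝ᵥ Cov⁻¹.mulVec x = c ^ 2 := by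
      rw [hx, ← hμQ, key]
      simp [dotProduct, Fin.sum_univ_three, hu, v, smul_eq_mul]
      ring
    have hxx : x ⬝ᵥ Cov⁻¹.mulVec x = W + c ^ 2 := by
      rw [hx, key, huu]
    have hxne : x ≠ 0 := by
      intro h
      have : x ⬝ᵥ Cov⁻¹.mulVec x = 0 := by rw [h]; simp
      rw [hxx] at this
      nlinarith [hc]
    refine ⟨hxdef ▸ hxne, ?_⟩
    rw [hxdef]
    have hτ : τ x = c ^ 2 / (W + c ^ 2) := by
      show (x ⬝ᵥ Cov⁻¹.mulVec μ) / (x ⬝ᵥ Cov⁻¹.mulVec x) = _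
      rw [huμ, hxx]
    have hD : Dray x = (τ x) ^ 2 * (W + c ^ 2) - 2 * τ x * c ^ 2 + c ^ 2 := by
      show (τ x • x - μ) ⬝ᵥ Cov⁻¹.mulVec (τ x • x - μ) = _
      rw [Matrix.mulVec_sub, Matrix.mulVec_smul, dotProduct_sub, sub_dotProduct,
        sub_dotProduct, dotProduct_smul, dotProduct_smul, smul_dotProduct,
        smul_dotProduct, hxx, huμ, hμx, hμAμ2, smul_eq_mul, smul_eq_mul, smul_eq_mul]
      ring
    rw [hD, hτ, hwW]
    have h1 : W + c ^ 2 ≠ 0 := by positivity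
    have h2 : (c:ℝ) ^ 2 ≠ 0 := by positivity
    field_simp
    ring
  · have hτμ : τ μ = 1 := by
      show (μ ⬝ᵥ Cov⁻¹.mulVec μ) / (μ ⬝ᵥ Cov⁻¹.mulVec μ) = 1
      exact div_self hμAμpos.ne'
    show (τ μ • μ - μ) ⬝ᵥ Cov⁻¹.mulVec (τ μ • μ - μ) = 0
    rw [hτμ, one_smul, sub_self]
    simp
end

section
/- Let x ∈ ℝ³ be a unit vector, F ∈ ℝ^{3×2} a matrix with FᵀF = I₂ and Fᵀx = 0, Σ̂ ∈ ℝ^{3×3} symmetric positive definite, and μ ∈ ℝ³. Then the 2×2 matrix FᵀΣ̂F is invertible and μᵀF(FᵀΣ̂F)⁻¹Fᵀμ = (μ − τ̂(x)x)ᵀ Σ̂⁻¹ (μ − τ̂(x)x), where τ̂(x) := (μᵀΣ̂⁻¹x)/(xᵀΣ̂⁻¹x); equivalently, μᵀF(FᵀΣ̂F)⁻¹Fᵀμ = μᵀ[Σ̂⁻¹ − (Σ̂⁻¹x xᵀ Σ̂⁻¹)/(xᵀΣ̂⁻¹x)]μ. -/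
open Matrix

/-!
The columns of `F` together with `x` form an orthonormal basis of `ℝ³`, so `F Fᵀ = 1 - x xᵀ`
is the orthogonal projection `P` onto `x^⊥`. The matrix
`M = Σ̂⁻¹ - Σ̂⁻¹ x xᵀ Σ̂⁻¹ / (xᵀ Σ̂⁻¹ x)` is symmetric and kills `x`, hence `P M = M P = M`, and
`Σ̂ M = 1 - x xᵀ Σ̂⁻¹ / (xᵀ Σ̂⁻¹ x)`. Since `Fᵀ x = 0`, these give `(Fᵀ Σ̂ F)(Fᵀ M F) = 1`, and then
`F (Fᵀ Σ̂ F)⁻¹ Fᵀ = P M P = M`. Expanding the square shows that the quadratic form of `M` at `μ`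
is that of `Σ̂⁻¹` at `μ - τ̂ x`.
-/

namespace Matrix

/-- A one-sided inverse of a square block matrix `[F x]` is two-sided. -/
theorem mul_transpose_eq_one_sub_vecMulVec {R n m : Type*} [CommRing R] [Fintype n]
    [DecidableEq n] [Fintype m] [DecidableEq m] {F : Matrix n m R} {x : n → R}
    (hcard : Fintype.card n = Fintype.card m + 1) (hx : x ⬝ᵥ x = 1) (hF : Fᵀ * F = 1)
    (hFx : Fᵀ *ᵥ x = 0) : F * Fᵀ = 1 - vecMulVec x x := by
  set X := replicateCol Unit x
  have hFX : Fᵀ * X = 0 := by rw [← replicateCol_mulVec, hFx, replicateCol_zero]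
  have hXF : Xᵀ * F = 0 := by rw [← transpose_transpose F, ← transpose_mul, hFX, transpose_zero]
  have hXX : Xᵀ * X = 1 := by
    ext
    simp [X, transpose_replicateCol, hx]
  have h : fromRows Fᵀ Xᵀ * fromCols F X = 1 := by
    rw [fromRows_mul_fromCols, hF, hFX, hXF, hXX, fromBlocks_one]
  have h' := (mul_eq_one_comm_of_card_eq (m ⊕ Unit) n R (by simp [hcard])).1 h
  rw [fromCols_mul_fromRows, transpose_replicateCol, ← vecMulVec_eq] at h'
  exact eq_sub_of_add_eq h'

section CompressedInv

variable {K n m : Type*} [Field K] [Fintype n] [DecidableEq n] [Fintype m] [DecidableEq m]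

/-- `F (Fᵀ S F)⁻¹ Fᵀ` for any `F` whose columns are an orthonormal basis of `x^⊥`
(`mul_inv_transpose_mul_mul_mul_transpose`). -/
noncomputable def compressedInv (S : Matrix n n K) (x : n → K) : Matrix n n K :=
  S⁻¹ - (1 / (x ⬝ᵥ S⁻¹ *ᵥ x)) • (S⁻¹ * vecMulVec x x * S⁻¹)

variable {S : Matrix n n K} {x : n → K}

theorem compressedInv_mulVec_self (hc : x ⬝ᵥ S⁻¹ *ᵥ x ≠ 0) : compressedInv S x *ᵥ x = 0 := by
  rw [compressedInv, sub_mulVec, smul_mulVec, ← mulVec_mulVec, ← mulVec_mulVec,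
    vecMulVec_mulVec, op_smul_eq_smul, mulVec_smul, smul_smul, one_div, inv_mul_cancel₀ hc,
    one_smul, sub_self]

theorem IsSymm.compressedInv (hS : S.IsSymm) : (compressedInv S x).IsSymm := by
  have hA : S⁻¹ᵀ = S⁻¹ := hS.inv
  simp [Matrix.compressedInv, IsSymm, transpose_mul, hA, Matrix.mul_assoc]

theorem vecMul_compressedInv_self (hS : S.IsSymm) (hc : x ⬝ᵥ S⁻¹ *ᵥ x ≠ 0) :
    x ᵥ* compressedInv S x = 0 := by
  rw [← mulVec_transpose, hS.compressedInv, compressedInv_mulVec_self hc]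

theorem one_sub_vecMulVec_mul_compressedInv (hS : S.IsSymm) (hc : x ⬝ᵥ S⁻¹ *ᵥ x ≠ 0) :
    (1 - vecMulVec x x) * compressedInv S x = compressedInv S x := by
  rw [Matrix.sub_mul, vecMulVec_mul, vecMul_compressedInv_self hS hc, vecMulVec_zero,
    Matrix.one_mul, sub_zero]

theorem compressedInv_mul_one_sub_vecMulVec (hc : x ⬝ᵥ S⁻¹ *ᵥ x ≠ 0) :
    compressedInv S x * (1 - vecMulVec x x) = compressedInv S x := by
  rw [Matrix.mul_sub, mul_vecMulVec, compressedInv_mulVec_self hc, zero_vecMulVec,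
    Matrix.mul_one, sub_zero]

theorem mul_compressedInv (hS : IsUnit S.det) :
    S * compressedInv S x = 1 - (1 / (x ⬝ᵥ S⁻¹ *ᵥ x)) • (vecMulVec x x * S⁻¹) := by
  rw [compressedInv, Matrix.mul_sub, Matrix.mul_smul, mul_nonsing_inv _ hS, ← Matrix.mul_assoc,
    ← Matrix.mul_assoc, mul_nonsing_inv _ hS, Matrix.one_mul]

theorem dotProduct_compressedInv_mulVec (hS : S.IsSymm) (μ : n → K) :
    let τ := (μ ⬝ᵥ S⁻¹ *ᵥ x) / (x ⬝ᵥ S⁻¹ *ᵥ x)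
    μ ⬝ᵥ compressedInv S x *ᵥ μ = (μ - τ • x) ⬝ᵥ S⁻¹ *ᵥ (μ - τ • x) := by
  intro τ
  have hxμ : x ⬝ᵥ S⁻¹ *ᵥ μ = μ ⬝ᵥ S⁻¹ *ᵥ x := by
    rw [dotProduct_mulVec, ← mulVec_transpose, hS.inv.eq, dotProduct_comm]
  simp only [compressedInv, sub_mulVec, smul_mulVec, ← mulVec_mulVec, vecMulVec_mulVec,
    op_smul_eq_smul, mulVec_smul, mulVec_sub, dotProduct_sub, sub_dotProduct, dotProduct_smul,
    smul_dotProduct, smul_eq_mul, hxμ, τ]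
  -- if `xᵀ S⁻¹ x = 0` then `τ = 0` (division by zero) and both sides are `μᵀ S⁻¹ μ`
  rcases eq_or_ne (x ⬝ᵥ S⁻¹ *ᵥ x) 0 with hc | hc
  · simp [hc]
  · field_simp
    ring

variable {F : Matrix n m K}

theorem transpose_mul_mul_mul_compressedInv_eq_one (hS : S.IsSymm) (hSdet : IsUnit S.det)
    (hc : x ⬝ᵥ S⁻¹ *ᵥ x ≠ 0) (hF : Fᵀ * F = 1) (hFx : Fᵀ *ᵥ x = 0)
    (hP : F * Fᵀ = 1 - vecMulVec x x) :
    (Fᵀ * S * F) * (Fᵀ * compressedInv S x * F) = 1 := by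
  calc (Fᵀ * S * F) * (Fᵀ * compressedInv S x * F)
      = Fᵀ * (S * ((F * Fᵀ) * compressedInv S x)) * F := by simp only [Matrix.mul_assoc]
    _ = Fᵀ * F - (1 / (x ⬝ᵥ S⁻¹ *ᵥ x)) • ((Fᵀ * vecMulVec x x) * S⁻¹ * F) := by
      rw [hP, one_sub_vecMulVec_mul_compressedInv hS hc, mul_compressedInv hSdet, Matrix.mul_sub,
        Matrix.sub_mul, Matrix.mul_one, Matrix.mul_smul, Matrix.smul_mul]
      simp only [Matrix.mul_assoc]
    _ = 1 := by rw [hF, mul_vecMulVec, hFx, zero_vecMulVec, Matrix.zero_mul, Matrix.zero_mul,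
      smul_zero, sub_zero]

theorem mul_inv_transpose_mul_mul_mul_transpose (hS : S.IsSymm)
    (hSdet : IsUnit S.det) (hc : x ⬝ᵥ S⁻¹ *ᵥ x ≠ 0) (hF : Fᵀ * F = 1) (hFx : Fᵀ *ᵥ x = 0)
    (hP : F * Fᵀ = 1 - vecMulVec x x) :
    F * (Fᵀ * S * F)⁻¹ * Fᵀ = compressedInv S x := by
  rw [inv_eq_right_inv (transpose_mul_mul_mul_compressedInv_eq_one hS hSdet hc hF hFx hP)]
  calc F * (Fᵀ * compressedInv S x * F) * Fᵀ
      = (F * Fᵀ) * (compressedInv S x * (F * Fᵀ)) := by simp only [Matrix.mul_assoc]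
    _ = compressedInv S x := by
      rw [hP, compressedInv_mul_one_sub_vecMulVec hc, one_sub_vecMulVec_mul_compressedInv hS hc]

end CompressedInv

end Matrix

/-- If `x ∈ ℝ³` is a unit vector, `F ∈ ℝ^{3×2}` has orthonormal columns
orthogonal to `x`, and `Σ̂` is symmetric positive definite, then `FᵀΣ̂F` is
invertible and `μᵀF(FᵀΣ̂F)⁻¹Fᵀμ = (μ − τ̂(x)x)ᵀΣ̂⁻¹(μ − τ̂(x)x)`, with
`τ̂(x) = (μᵀΣ̂⁻¹x)/(xᵀΣ̂⁻¹x)`; equivalently it equals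
`μᵀ[Σ̂⁻¹ − (Σ̂⁻¹xxᵀΣ̂⁻¹)/(xᵀΣ̂⁻¹x)]μ`. -/
theorem stmt_17 (x : Fin 3 → ℝ) (hx : x ⬝ᵥ x = 1)
    (F : Matrix (Fin 3) (Fin 2) ℝ) (hF : Fᵀ * F = 1) (hFx : Fᵀ.mulVec x = 0)
    (Shat : Matrix (Fin 3) (Fin 3) ℝ) (hShat : Shat.PosDef) (μ : Fin 3 → ℝ) :
    let τhat : ℝ := (μ ⬝ᵥ Shat⁻¹.mulVec x) / (x ⬝ᵥ Shat⁻¹.mulVec x)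
    IsUnit (Fᵀ * Shat * F).det ∧
    μ ⬝ᵥ F.mulVec ((Fᵀ * Shat * F)⁻¹.mulVec (Fᵀ.mulVec μ)) =
      (μ - τhat • x) ⬝ᵥ Shat⁻¹.mulVec (μ - τhat • x) ∧
    μ ⬝ᵥ F.mulVec ((Fᵀ * Shat * F)⁻¹.mulVec (Fᵀ.mulVec μ)) =
      μ ⬝ᵥ (Shat⁻¹ -
        (1 / (x ⬝ᵥ Shat⁻¹.mulVec x)) • (Shat⁻¹ * vecMulVec x x * Shat⁻¹)).mulVec μ := by
  intro τhat
  have hS : Shat.IsSymm := isHermitian_iff_isSymm.1 hShat.isHermitian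
  have hSdet : IsUnit Shat.det := (isUnit_iff_isUnit_det _).1 hShat.isUnit
  have hx0 : x ≠ 0 := by
    rintro rfl
    simp at hx
  have hc : x ⬝ᵥ Shat⁻¹ *ᵥ x ≠ 0 := by
    simpa using (hShat.inv.dotProduct_mulVec_pos hx0).ne'
  have hP : F * Fᵀ = 1 - vecMulVec x x := mul_transpose_eq_one_sub_vecMulVec (by simp) hx hF hFx
  have hLHS : μ ⬝ᵥ F *ᵥ (Fᵀ * Shat * F)⁻¹ *ᵥ Fᵀ *ᵥ μ = μ ⬝ᵥ compressedInv Shat x *ᵥ μ := by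
    rw [mulVec_mulVec, mulVec_mulVec,
      mul_inv_transpose_mul_mul_mul_transpose hS hSdet hc hF hFx hP]
  refine ⟨isUnit_det_of_right_inverse
    (transpose_mul_mul_mul_compressedInv_eq_one hS hSdet hc hF hFx hP), ?_, hLHS⟩
  rw [hLHS]
  exact dotProduct_compressedInv_mulVec hS μ
end

section
/- Let x ∈ ℝ³ be a unit vector, F ∈ ℝ^{3×2} a matrix with FᵀF = I₂ and Fᵀx = 0, and Σ̂ ∈ ℝ^{3×3} symmetric positive definite. Then det(FᵀΣ̂F) = det(Σ̂) · (xᵀΣ̂⁻¹x). -/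
/-!
Adjoin `x` to the columns of `F` to get an orthogonal matrix `Q`. Conjugating by `Q` preserves the
determinant and commutes with inversion, so `M = QᵀΣ̂Q` has `det M = det Σ̂` and
`(M⁻¹)₃₃ = xᵀΣ̂⁻¹x`. On the other hand `FᵀΣ̂F` is the complementary minor of that corner entry,
so the cofactor formula `det M · (M⁻¹)₃₃ = det (FᵀΣ̂F)` gives the identity.
-/

open Matrix

variable {R : Type*} [CommRing R] {n : ℕ}

theorem Matrix.det_submatrix_succAbove_self {A : Matrix (Fin (n + 1)) (Fin (n + 1)) R}
    (hA : IsUnit A.det) (i : Fin (n + 1)) :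
    (A.submatrix i.succAbove i.succAbove).det = A.det * A⁻¹ i i := by
  rw [inv_def, smul_apply, adjugate_fin_succ_eq_det_submatrix, smul_eq_mul, ← mul_assoc,
    Ring.mul_inverse_cancel _ hA, one_mul, (Even.add_self (i : ℕ)).neg_one_pow, one_mul]

section Conjugation

variable {m : Type*} [Fintype m] [DecidableEq m] {Q : Matrix m m R}

theorem Matrix.det_transpose_mul_mul_of_transpose_mul_self (hQ : Qᵀ * Q = 1)
    (S : Matrix m m R) : (Qᵀ * S * Q).det = S.det := by
  have hdetQ : Q.det * Q.det = 1 := by simpa [det_transpose] using congrArg det hQ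
  rw [det_mul, det_mul, det_transpose]
  linear_combination S.det * hdetQ

theorem Matrix.inv_transpose_mul_mul_of_transpose_mul_self (hQ : Qᵀ * Q = 1)
    (S : Matrix m m R) : (Qᵀ * S * Q)⁻¹ = Qᵀ * S⁻¹ * Q := by
  rw [mul_inv_rev, mul_inv_rev, ← transpose_nonsing_inv, inv_eq_left_inv hQ, transpose_transpose,
    Matrix.mul_assoc]

end Conjugation

def Matrix.snocCol {k : Type*} (F : Matrix k (Fin n) R) (x : k → R) :
    Matrix k (Fin (n + 1)) R :=
  of fun i => Fin.snoc (F i) (x i)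

section SnocCol

variable {k : Type*} [Fintype k]

theorem Matrix.transpose_mul_mul_snocCol_submatrix_castSucc (F : Matrix k (Fin n) R) (x : k → R)
    (A : Matrix k k R) :
    ((F.snocCol x)ᵀ * A * F.snocCol x).submatrix Fin.castSucc Fin.castSucc = Fᵀ * A * F := by
  ext a b
  simp [snocCol, mul_apply]

theorem Matrix.transpose_mul_mul_snocCol_last_last (F : Matrix k (Fin n) R) (x : k → R)
    (A : Matrix k k R) :
    ((F.snocCol x)ᵀ * A * F.snocCol x) (Fin.last n) (Fin.last n) = x ⬝ᵥ A *ᵥ x := by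
  simp only [snocCol, mul_apply, transpose_apply, of_apply, Fin.snoc_last, dotProduct, mulVec,
    Finset.mul_sum, Finset.sum_mul]
  rw [Finset.sum_comm]
  exact Finset.sum_congr rfl fun _ _ => Finset.sum_congr rfl fun _ _ => by ring

theorem Matrix.transpose_mul_snocCol_self {F : Matrix k (Fin n) R} {x : k → R}
    (hF : Fᵀ * F = 1) (hFx : Fᵀ *ᵥ x = 0) (hx : x ⬝ᵥ x = 1) :
    (F.snocCol x)ᵀ * F.snocCol x = 1 := by
  ext i j
  induction i using Fin.lastCases <;> induction j using Fin.lastCases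
  case last.last => simpa [snocCol, mul_apply, dotProduct] using hx
  case last.cast b =>
    simpa [snocCol, mul_apply, mulVec, dotProduct, mul_comm, (Fin.castSucc_lt_last b).ne']
      using congrFun hFx b
  case cast.last a =>
    simpa [snocCol, mul_apply, mulVec, dotProduct, (Fin.castSucc_lt_last a).ne]
      using congrFun hFx a
  case cast.cast a b => simpa [snocCol, mul_apply, one_apply] using congrFun₂ hF a b

end SnocCol

theorem Matrix.det_transpose_mul_mul_eq_det_mul_dotProduct_inv
    {F : Matrix (Fin (n + 1)) (Fin n) R} {x : Fin (n + 1) → R}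
    (hF : Fᵀ * F = 1) (hFx : Fᵀ *ᵥ x = 0) (hx : x ⬝ᵥ x = 1)
    {S : Matrix (Fin (n + 1)) (Fin (n + 1)) R} (hS : IsUnit S.det) :
    (Fᵀ * S * F).det = S.det * (x ⬝ᵥ S⁻¹ *ᵥ x) := by
  have hQ := transpose_mul_snocCol_self hF hFx hx
  have hdet := det_transpose_mul_mul_of_transpose_mul_self hQ S
  calc (Fᵀ * S * F).det
      = (((F.snocCol x)ᵀ * S * F.snocCol x).submatrix
          (Fin.last n).succAbove (Fin.last n).succAbove).det := by
        rw [Fin.succAbove_last, transpose_mul_mul_snocCol_submatrix_castSucc]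
    _ = S.det * (x ⬝ᵥ S⁻¹ *ᵥ x) := by
        rw [det_submatrix_succAbove_self (hdet ▸ hS), hdet,
          inv_transpose_mul_mul_of_transpose_mul_self hQ, transpose_mul_mul_snocCol_last_last]

/-- If `x ∈ ℝ³` is a unit vector, `F ∈ ℝ^{3×2}` has orthonormal columns
orthogonal to `x`, and `Σ̂` is symmetric positive definite, then
`det(FᵀΣ̂F) = det(Σ̂)·(xᵀΣ̂⁻¹x)`. -/
theorem stmt_18 (x : Fin 3 → ℝ) (hx : x ⬝ᵥ x = 1)
    (F : Matrix (Fin 3) (Fin 2) ℝ) (hF : Fᵀ * F = 1) (hFx : Fᵀ.mulVec x = 0)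
    (Shat : Matrix (Fin 3) (Fin 3) ℝ) (hShat : Shat.PosDef) :
    (Fᵀ * Shat * F).det = Shat.det * (x ⬝ᵥ Shat⁻¹.mulVec x) :=
  det_transpose_mul_mul_eq_det_mul_dotProduct_inv hF hFx hx hShat.det_pos.ne'.isUnit
end
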